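/- Let q be a real number with q > 0 and q ≠ 1. Then for all integers r ≥ 1 and k ≥ 0, (−1)^k · [k]! · Σ_{i=0}^{r−1} q^{i·k} · [r−1]_i / [k+r]_{i+1} = (−1)^k · [k]! · [r−1]! · q^{−r+1} · Σ_{i=0}^{r−1} ((q−1)^i · q^{i(i+1)/2 − i(r−1)} / [r−1−i]!) · (1/[k+i+1]). -/

import Mathlib

open Finset

/-- The q-bracket: `[x] = (q^x - 1)/(q - 1)`. -/
noncomputable def qb (q x : ℝ) : ℝ := (q ^ x - 1) / (q - 1)

/-- The q-falling factorial `[x]_m = [x]·[x-1]⋯[x-m+1]`. -/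
noncomputable def qff (q x : ℝ) (m : ℕ) : ℝ := ∏ j ∈ range m, qb q (x - j)

/-- The q-factorial `[m]! = [m]_m`. -/
noncomputable def qfact (q : ℝ) (m : ℕ) : ℝ := qff q (m : ℝ) m

/-! Write `[x]` for `qb q x` and `s = r - 1`. As functions of `s`, both sides (without the factor
`(-1)^k [k]!`) satisfy `X (s + 1) = (1 + q^k [s+1] X s) / [k+s+2]` with `X 0 = 1/[k+1]`. On the
left this comes from peeling the first factor off each falling factorial. On the right, write
`[k+s+2] = [k+i+1] + q^(k+i+1) [s+1-i]` in the `i`-th partial fraction: the first summands add up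
to `1` because `∑ i ≤ r, pfCoeff q r i = q^r / [r]!`, and the second ones reassemble the sum
for `s`. -/

noncomputable def pfCoeff (q : ℝ) (s i : ℕ) : ℝ :=
  (q - 1) ^ i * q ^ (((i * (i + 1) / 2 : ℕ) : ℤ) - (i : ℤ) * s) / qfact q (s - i)

noncomputable def fallingSum (q : ℝ) (s k : ℕ) : ℝ :=
  ∑ i ∈ range (s + 1), q ^ (i * k) * qff q s i / qff q ((k : ℝ) + s + 1) (i + 1)

noncomputable def pfSum (q : ℝ) (s k : ℕ) : ℝ :=
  qfact q s / q ^ s * ∑ i ∈ range (s + 1), pfCoeff q s i / qb q ((k : ℝ) + i + 1)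

section PartialFractions

variable {q : ℝ}

lemma qb_natCast (q : ℝ) (n : ℕ) : qb q n = (q ^ n - 1) / (q - 1) := by
  rw [qb, Real.rpow_natCast]

lemma qb_add (hq : 0 < q) (x y : ℝ) : qb q (x + y) = qb q x + q ^ x * qb q y := by
  simp only [qb, Real.rpow_add hq]
  ring

lemma qb_ne_zero (hq : 0 < q) (hq1 : q ≠ 1) {x : ℝ} (hx : x ≠ 0) : qb q x ≠ 0 := by
  refine div_ne_zero (sub_ne_zero.mpr fun h => hx ?_) (sub_ne_zero.mpr hq1)
  rwa [← Real.rpow_zero q, Real.rpow_right_inj hq hq1] at h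

lemma qff_succ (q x : ℝ) (m : ℕ) : qff q x (m + 1) = qb q x * qff q (x - 1) m := by
  simp only [qff, prod_range_succ', Nat.cast_add, Nat.cast_one, Nat.cast_zero, sub_zero,
    sub_add_eq_sub_sub_swap, mul_comm]

lemma qfact_zero (q : ℝ) : qfact q 0 = 1 := by simp [qfact, qff]

lemma qfact_succ (q : ℝ) (m : ℕ) : qfact q (m + 1) = qb q (m + 1) * qfact q m := by
  rw [qfact, qff_succ, Nat.cast_succ, add_sub_cancel_right, qfact]

lemma qfact_ne_zero (hq : 0 < q) (hq1 : q ≠ 1) (m : ℕ) : qfact q m ≠ 0 := by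
  induction m with
  | zero => simp [qfact_zero]
  | succ m ih => exact qfact_succ q m ▸ mul_ne_zero (qb_ne_zero hq hq1 (by positivity)) ih

lemma pfCoeff_zero_right (q : ℝ) (s : ℕ) : pfCoeff q s 0 = 1 / qfact q s := by
  simp [pfCoeff]

lemma pfCoeff_succ_succ (hq : 0 < q) (s i : ℕ) :
    pfCoeff q (s + 1) (i + 1) = (q - 1) / q ^ s * pfCoeff q s i := by
  have htri : (i + 1) * (i + 1 + 1) / 2 = i * (i + 1) / 2 + (i + 1) := by
    rw [show (i + 1) * (i + 1 + 1) = i * (i + 1) + 2 * (i + 1) by ring,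
      Nat.add_mul_div_left _ _ two_pos]
  have hexp : (((i + 1) * (i + 1 + 1) / 2 : ℕ) : ℤ) - ((i + 1 : ℕ) : ℤ) * ((s + 1 : ℕ) : ℤ)
      = (((i * (i + 1) / 2 : ℕ) : ℤ) - (i : ℤ) * s) - (s : ℤ) := by
    rw [htri]; push_cast; ring
  rw [pfCoeff, pfCoeff, hexp, zpow_sub₀ hq.ne', zpow_natCast, Nat.add_sub_add_right]
  ring

lemma sum_pfCoeff (hq : 0 < q) (hq1 : q ≠ 1) (r : ℕ) :
    ∑ i ∈ range (r + 1), pfCoeff q r i = q ^ r / qfact q r := by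
  induction r with
  | zero => simp [pfCoeff_zero_right, qfact_zero]
  | succ r ih =>
    have hqb : (q - 1) * qb q (r + 1) = q ^ (r + 1) - 1 := by
      rw [← Nat.cast_succ, qb_natCast, mul_div_cancel₀ _ (sub_ne_zero.mpr hq1)]
    have hb : qb q (r + 1) ≠ 0 := qb_ne_zero hq hq1 (by positivity)
    have hf := qfact_ne_zero hq hq1 r
    simp only [sum_range_succ' _ (r + 1), pfCoeff_succ_succ hq, ← mul_sum, ih,
      pfCoeff_zero_right, qfact_succ]
    field_simp
    linear_combination hqb

lemma pow_mul_qb_mul_pfCoeff (hq : 0 < q) (hq1 : q ≠ 1) {s i : ℕ} (hi : i ≤ s) :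
    q ^ (i + 1) * qb q (s + 1 - i) * pfCoeff q (s + 1) i = q * pfCoeff q s i := by
  have hfact : qfact q (s + 1 - i) = qb q (s + 1 - i) * qfact q (s - i) := by
    rw [Nat.sub_add_comm hi, qfact_succ, Nat.cast_sub hi]
    ring_nf
  have hexp : ((i * (i + 1) / 2 : ℕ) : ℤ) - (i : ℤ) * ((s + 1 : ℕ) : ℤ)
      = (((i * (i + 1) / 2 : ℕ) : ℤ) - (i : ℤ) * s) - (i : ℤ) := by
    push_cast; ring
  have hb : qb q (s + 1 - i) ≠ 0 := qb_ne_zero hq hq1 (by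
    have : (i : ℝ) ≤ s := by exact_mod_cast hi
    linarith)
  have hf := qfact_ne_zero hq hq1 (s - i)
  rw [pfCoeff, pfCoeff, hexp, zpow_sub₀ hq.ne', zpow_natCast, hfact]
  field_simp
  ring

lemma fallingSum_zero (q : ℝ) (k : ℕ) : fallingSum q 0 k = 1 / qb q ((k : ℝ) + 1) := by
  simp [fallingSum, qff]

lemma pfSum_zero (q : ℝ) (k : ℕ) : pfSum q 0 k = 1 / qb q ((k : ℝ) + 1) := by
  simp [pfSum, pfCoeff_zero_right, qfact_zero]

lemma fallingSum_succ (q : ℝ) (s k : ℕ) :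
    fallingSum q (s + 1) k
      = (1 + q ^ k * qb q (s + 1) * fallingSum q s k) / qb q ((k : ℝ) + (s + 1) + 1) := by
  rw [fallingSum, sum_range_succ', fallingSum, mul_sum, add_comm, add_div, sum_div]
  push_cast
  congr 1
  · simp [qff]
  · refine sum_congr rfl fun i _ => ?_
    rw [qff_succ, qff_succ _ _ (i + 1), add_sub_cancel_right, add_sub_cancel_right, add_one_mul,
      pow_add, add_assoc (k : ℝ) s 1]
    ring

lemma pfCoeff_mul_qb_div (hq : 0 < q) (hq1 : q ≠ 1) {s i : ℕ} (hi : i ≤ s) (k : ℕ) :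
    pfCoeff q (s + 1) i * qb q ((k : ℝ) + (s + 1) + 1) / qb q ((k : ℝ) + i + 1)
      = pfCoeff q (s + 1) i + q ^ (k + 1) * (pfCoeff q s i / qb q ((k : ℝ) + i + 1)) := by
  have hpow : q ^ ((k : ℝ) + i + 1) = q ^ k * q ^ (i + 1) := by
    rw [← pow_add, ← Real.rpow_natCast]
    push_cast
    ring_nf
  have hB : qb q ((k : ℝ) + i + 1) ≠ 0 := qb_ne_zero hq hq1 (by positivity)
  rw [show (k : ℝ) + (s + 1) + 1 = (k + i + 1) + (s + 1 - i) by ring, qb_add hq, hpow]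
  field_simp
  linear_combination q ^ k * pow_mul_qb_mul_pfCoeff hq hq1 hi

lemma pfSum_succ (hq : 0 < q) (hq1 : q ≠ 1) (s k : ℕ) :
    pfSum q (s + 1) k
      = (1 + q ^ k * qb q (s + 1) * pfSum q s k) / qb q ((k : ℝ) + (s + 1) + 1) := by
  have hD : qb q ((k : ℝ) + (s + 1) + 1) ≠ 0 := qb_ne_zero hq hq1 (by positivity)
  have hf := qfact_ne_zero hq hq1 s
  have hb : qb q (s + 1) ≠ 0 := qb_ne_zero hq hq1 (by positivity)
  have hsum : (∑ i ∈ range (s + 1 + 1), pfCoeff q (s + 1) i / qb q ((k : ℝ) + i + 1))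
        * qb q ((k : ℝ) + (s + 1) + 1)
      = q ^ (s + 1) / qfact q (s + 1)
        + q ^ (k + 1) * ∑ i ∈ range (s + 1), pfCoeff q s i / qb q ((k : ℝ) + i + 1) := by
    have hlast : pfCoeff q (s + 1) (s + 1) / qb q ((k : ℝ) + (s + 1 : ℕ) + 1)
        * qb q ((k : ℝ) + (s + 1) + 1) = pfCoeff q (s + 1) (s + 1) := by
      rw [Nat.cast_succ, div_mul_cancel₀ _ hD]
    have hterm : ∀ i ∈ range (s + 1), pfCoeff q (s + 1) i / qb q ((k : ℝ) + i + 1)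
        * qb q ((k : ℝ) + (s + 1) + 1)
        = pfCoeff q (s + 1) i + q ^ (k + 1) * (pfCoeff q s i / qb q ((k : ℝ) + i + 1)) :=
      fun i hi => by
        rw [div_mul_eq_mul_div, pfCoeff_mul_qb_div hq hq1 (Nat.lt_succ_iff.mp (mem_range.mp hi))]
    rw [← sum_pfCoeff hq hq1, sum_range_succ, add_mul, hlast, sum_range_succ _ (s + 1), mul_sum,
      sum_mul, sum_congr rfl hterm, sum_add_distrib]
    ring
  rw [eq_div_iff hD, pfSum, mul_assoc, hsum, pfSum, qfact_succ]
  field_simp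
  ring

lemma fallingSum_eq_pfSum (hq : 0 < q) (hq1 : q ≠ 1) (s k : ℕ) :
    fallingSum q s k = pfSum q s k := by
  induction s with
  | zero => rw [fallingSum_zero, pfSum_zero]
  | succ s ih => rw [fallingSum_succ, pfSum_succ hq hq1, ih]

end PartialFractions

theorem g_r_second_expression (q : ℝ) (hq : 0 < q) (hq1 : q ≠ 1) :
    ∀ r k : ℕ, 1 ≤ r →
      (-1 : ℝ) ^ k * qfact q k *
          ∑ i ∈ range r, q ^ (i * k) * qff q ((r : ℝ) - 1) i / qff q ((k : ℝ) + r) (i + 1)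
        = (-1 : ℝ) ^ k * qfact q k * qfact q (r - 1) * q ^ (-(r : ℤ) + 1) *
            ∑ i ∈ range r,
              (q - 1) ^ i * q ^ (((i * (i + 1) / 2 : ℕ) : ℤ) - (i : ℤ) * ((r : ℤ) - 1)) /
                qfact q (r - 1 - i) * (1 / qb q ((k : ℝ) + i + 1)) := by
  intro r k hr
  obtain ⟨s, rfl⟩ : ∃ s, r = s + 1 := ⟨r - 1, by omega⟩
  have hsum := fallingSum_eq_pfSum hq hq1 s k
  rw [fallingSum, pfSum] at hsum
  rw [show -((s + 1 : ℕ) : ℤ) + 1 = -(s : ℤ) by push_cast; ring, zpow_neg, zpow_natCast]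
  simp only [Nat.cast_succ, add_sub_cancel_right, Nat.add_sub_cancel, ← add_assoc, mul_one_div, hsum,
    pfCoeff]
  ring
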